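/- arXiv:2212.12979 — 2 statements merged into one kernel-verified Lean document; each statement's English description precedes it below -/
import Mathlib

section
/- Let B ≥ 2. Suppose each of K users independently and uniformly samples a vector V^k ∈ (Z/B)^{N−1}, and user k with demand d_k ∈ [0:N−1] forms the query Q_b^k ∈ (Z/B)^N by inserting the entry b − Σ_n V^k_n (mod B) at position d_k into V^k. Then for each fixed server index b, the joint query (Q_b^1, …, Q_b^K) is uniformly distributed on the set {(q^1,…,q^K) : each q^k ∈ (Z/B)^N with coordinate-sum ≡ b mod B}, regardless of the demand vector (d_1,…,d_K); consequently the demand vector and the query to server b are independent. -/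
/-!
Each user's query to server `b` is `v ↦ insertNth p (b - ∑ v) v`, which is a bijection from
`(ZMod B)^n` onto the vectors of `(ZMod B)^(n+1)` with coordinate sum `b`, whatever the position
`p`: removing coordinate `p` inverts it. Hence the joint query map is injective with range the
tuples whose coordinate sums are all `b`, and the push-forward of the uniform distribution
puts mass `1 / B^(Kn)` on each point of that range and `0` elsewhere, independently of `d`.
-/

open Finset Function

namespace Fin

variable {M : Type*} [AddCommGroup M] {n : ℕ}

theorem injective_insertNth_sub_sum (p : Fin (n + 1)) (b : M) :
    Injective fun v : Fin n → M => (insertNth p (b - ∑ i, v i) v : Fin (n + 1) → M) :=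
  fun _ _ h => (insertNth_injective2 h).2

theorem range_insertNth_sub_sum (p : Fin (n + 1)) (b : M) :
    Set.range (fun v : Fin n → M => (insertNth p (b - ∑ i, v i) v : Fin (n + 1) → M)) =
      {q | ∑ i, q i = b} := by
  ext q
  constructor
  · rintro ⟨v, rfl⟩
    simp
  · intro hq
    refine ⟨removeNth p q, insertNth_eq_iff.2 ⟨?_, rfl⟩⟩
    rw [sub_eq_iff_eq_add, ← hq, ← add_sum_removeNth p q]

end Fin

namespace PMF

variable {α β : Type*}

theorem map_apply_of_injective (p : PMF α) {f : α → β} (hf : Injective f) (a : α) :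
    p.map f (f a) = p a := by
  rw [map_apply, tsum_eq_single a fun a' ha' => if_neg (hf.ne ha').symm, if_pos rfl]

theorem map_apply_eq_zero_of_notMem_range (p : PMF α) {f : α → β} {b : β}
    (hb : b ∉ Set.range f) : p.map f b = 0 :=
  (apply_eq_zero_iff _ _).2 <| by
    rw [support_map]
    exact fun ⟨a, _, ha⟩ => hb ⟨a, ha⟩

end PMF

theorem stmt_8_general (B K n : ℕ) [NeZero B]
    (d : Fin K → Fin (n + 1)) (b : ZMod B) :
    ∀ q : Fin K → Fin (n + 1) → ZMod B,
      ((∀ k, ∑ i, q k i = b) →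
        (PMF.map
            (fun (V : Fin K → Fin n → ZMod B) (k : Fin K) =>
              Fin.insertNth (d k) (b - ∑ i, V k i) (V k))
            (PMF.uniformOfFintype (Fin K → Fin n → ZMod B))) q
          = 1 / (B : ENNReal) ^ (K * n))
      ∧ ((¬ ∀ k, ∑ i, q k i = b) →
        (PMF.map
            (fun (V : Fin K → Fin n → ZMod B) (k : Fin K) =>
              Fin.insertNth (d k) (b - ∑ i, V k i) (V k))
            (PMF.uniformOfFintype (Fin K → Fin n → ZMod B))) q = 0) := by
  intro q
  let query := Pi.map fun k (v : Fin n → ZMod B) =>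
    (Fin.insertNth (d k) (b - ∑ i, v i) v : Fin (n + 1) → ZMod B)
  have hinj : Injective query :=
    Injective.piMap fun k => Fin.injective_insertNth_sub_sum (d k) b
  have hrange : q ∈ Set.range query ↔ ∀ k, ∑ i, q k i = b := by
    simp [query, Set.range_piMap, Fin.range_insertNth_sub_sum]
  refine ⟨fun hq => ?_, fun hq => PMF.map_apply_eq_zero_of_notMem_range _ (mt hrange.1 hq)⟩
  obtain ⟨V, rfl⟩ := hrange.2 hq
  refine (PMF.map_apply_of_injective _ hinj V).trans ?_
  rw [PMF.uniformOfFintype_apply]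
  simp [ZMod.card, ← pow_mul, mul_comm n K]

/-- Privacy of the PDA-based MuPIR scheme. Each user k samples
V^k ∈ (ZMod B)^n uniformly (n = N−1) and sends to server b the query
Q_b^k = insert (b − Σ V^k) at position d_k.  For any fixed b, the joint query
is uniform on the set of tuples of vectors with coordinate-sum b, with
probability 1/B^{Kn} on each such tuple and 0 elsewhere, regardless of the
demand vector d; hence the demand and the query to server b are independent. -/
theorem stmt_8 (B K n : ℕ) [NeZero B] (hB : 2 ≤ B)
    (d : Fin K → Fin (n + 1)) (b : ZMod B) :
    ∀ q : Fin K → Fin (n + 1) → ZMod B,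
      ((∀ k, ∑ i, q k i = b) →
        (PMF.map
            (fun (V : Fin K → Fin n → ZMod B) (k : Fin K) =>
              Fin.insertNth (d k) (b - ∑ i, V k i) (V k))
            (PMF.uniformOfFintype (Fin K → Fin n → ZMod B))) q
          = 1 / (B : ENNReal) ^ (K * n))
      ∧ ((¬ ∀ k, ∑ i, q k i = b) →
        (PMF.map
            (fun (V : Fin K → Fin n → ZMod B) (k : Fin K) =>
              Fin.insertNth (d k) (b - ∑ i, V k i) (V k))
            (PMF.uniformOfFintype (Fin K → Fin n → ZMod B))) q = 0) :=
  stmt_8_general B K n d b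
end

section
/- For a query vector Q ∈ (Z/B)^N constructed from V ∈ (Z/B)^{N−1} and demand d by setting Q_d = b − Σ_n V_n and Q_n = V_{σ(n)} elsewhere, the answer A_b = Σ_{n=0}^{N−1} W_{n, Q_n} (with the convention W_{n,0} = 0) satisfies: A_{(V̄)} = Σ_{n ≠ d} W_{n, V_n'} (where V̄ = Σ_n V_n and V_n' is the corresponding entry), and for any b' ∈ [1:B−1], A_{(b' + V̄ mod B)} − A_{(V̄)} = W_{d, b'}. -/
theorem Fin.sum_apply_insertNth {n : ℕ} {α M : Type*} [AddCommMonoid M]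
    (f : Fin (n + 1) → α → M) (p : Fin (n + 1)) (x : α) (v : Fin n → α) :
    ∑ j, f j ((Fin.insertNth p x v : Fin (n + 1) → α) j)
      = f p x + ∑ i, f (p.succAbove i) (v i) := by
  simp only [Fin.sum_univ_succAbove _ p, Fin.insertNth_apply_same, Fin.insertNth_apply_succAbove]

theorem stmt_10_general (B n : ℕ) {A : Type*} [AddCommGroup A]
    (W : Fin (n + 1) → ZMod B → A) (hW0 : ∀ m, W m 0 = 0)
    (V : Fin n → ZMod B) (d : Fin (n + 1)) :
    ((∑ j, W j ((Fin.insertNth d ((∑ i, V i) - ∑ i, V i) V : Fin (n + 1) → ZMod B) j))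
        = ∑ i, W (d.succAbove i) (V i))
    ∧ ∀ b' : ZMod B,
        (∑ j, W j ((Fin.insertNth d ((b' + ∑ i, V i) - ∑ i, V i) V : Fin (n + 1) → ZMod B) j))
          - (∑ j, W j ((Fin.insertNth d ((∑ i, V i) - ∑ i, V i) V : Fin (n + 1) → ZMod B) j))
        = W d b' := by
  have interference :
      ∑ j, W j ((Fin.insertNth d ((∑ i, V i) - ∑ i, V i) V : Fin (n + 1) → ZMod B) j)
      = ∑ i, W (d.succAbove i) (V i) := by
    rw [sub_self, Fin.sum_apply_insertNth, hW0, zero_add]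
  refine ⟨interference, fun b' => ?_⟩
  rw [interference, add_sub_cancel_right, Fin.sum_apply_insertNth, add_sub_cancel_right]

/-- Decoding correctness.  With packets W n j (and W n 0 = 0) in
an abelian group, and the answer A b = Σ_j W j ((insertNth d (b − ΣV) V) j),
we have A(ΣV) = Σ_{i} W (succAbove d i) (V i) (interference only), and for any
b', A(b' + ΣV) − A(ΣV) = W d b'. -/
theorem stmt_10 (B n : ℕ) [NeZero B] {A : Type*} [AddCommGroup A]
    (W : Fin (n + 1) → ZMod B → A) (hW0 : ∀ m, W m 0 = 0)
    (V : Fin n → ZMod B) (d : Fin (n + 1)) :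
    ((∑ j, W j ((Fin.insertNth d ((∑ i, V i) - ∑ i, V i) V : Fin (n + 1) → ZMod B) j))
        = ∑ i, W (d.succAbove i) (V i))
    ∧ ∀ b' : ZMod B,
        (∑ j, W j ((Fin.insertNth d ((b' + ∑ i, V i) - ∑ i, V i) V : Fin (n + 1) → ZMod B) j))
          - (∑ j, W j ((Fin.insertNth d ((∑ i, V i) - ∑ i, V i) V : Fin (n + 1) → ZMod B) j))
        = W d b' :=
  stmt_10_general B n W hW0 V d
end
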